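/- Let Δ ⊆ ℝ⁴ be a reflexive polytope and let w₁, w₂, w₃, w₄, w₅ ∈ Δ ∩ ℤ⁴ satisfy w₁ + w₂ = w₃ + w₄. Assume {w₁, w₂, w₃, w₅} is ℝ-linearly independent, and that Cone(w₁,w₂,w₃,w₅) ∩ Δ ∩ ℤ⁴ = {0, w₁, w₂, w₃, w₅} and Cone(w₁,w₂,w₄,w₅) ∩ Δ ∩ ℤ⁴ = {0, w₁, w₂, w₄, w₅}. If both w₁+w₂+w₃+w₅ and w₁+w₂+w₄+w₅ lie in 3·∂Δ ∪ 4·∂Δ, then both w₁+w₃+w₄+w₅ and w₂+w₃+w₄+w₅ lie in 3·∂Δ ∪ 4·∂Δ. (This is the combinatorial content of the wall-crossing proposition in the case where the circuit J₋ ∪ J₊ has four elements: if one of two Δ-maximal fans related by such a wall crossing has good maximal cones, then so does the other.) -/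

import Mathlib

open Pointwise

/-- The standard pairing `⟨m,n⟩ = ∑ i, mᵢ nᵢ` on `ℝ^d`. -/
def pairing {d : ℕ} (m n : Fin d → ℝ) : ℝ := ∑ i, m i * n i

/-- A point of `ℝ^d` is a lattice point if all coordinates are integers. -/
def IsLatticePt {d : ℕ} (v : Fin d → ℝ) : Prop := ∀ i, ∃ n : ℤ, v i = (n : ℝ)

/-- The set of lattice points of `ℝ^d`. -/
def latticePts (d : ℕ) : Set (Fin d → ℝ) := {v | IsLatticePt v}

/-- A lattice polytope is the convex hull of finitely many lattice points. -/
def IsLatticePolytope {d : ℕ} (Δ : Set (Fin d → ℝ)) : Prop :=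
  ∃ S : Finset (Fin d → ℝ), (S : Set (Fin d → ℝ)) ⊆ latticePts d ∧
    Δ = convexHull ℝ (S : Set (Fin d → ℝ))

/-- The dual polytope `Δ* = {m : ⟨m,n⟩ ≥ -1 for all n ∈ Δ}`. -/
def dualPolytope {d : ℕ} (Δ : Set (Fin d → ℝ)) : Set (Fin d → ℝ) :=
  {m | ∀ n ∈ Δ, -1 ≤ pairing m n}

/-- A reflexive polytope: a lattice polytope with `0` in its interior
whose dual polytope is again a lattice polytope. -/
def IsReflexive {d : ℕ} (Δ : Set (Fin d → ℝ)) : Prop :=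
  IsLatticePolytope Δ ∧ (0 : Fin d → ℝ) ∈ interior Δ ∧ IsLatticePolytope (dualPolytope Δ)

/-- `Cone(v₁,…,v_k) = {r₁v₁ + ⋯ + r_kv_k : rᵢ ≥ 0}`. -/
def coneOf {d k : ℕ} (v : Fin k → (Fin d → ℝ)) : Set (Fin d → ℝ) :=
  {x | ∃ r : Fin k → ℝ, (∀ i, 0 ≤ r i) ∧ x = ∑ i, r i • v i}

/-- `r·∂Δ`, the frontier (topological boundary) of the dilate `rΔ`. -/
def bdry {d : ℕ} (r : ℝ) (Δ : Set (Fin d → ℝ)) : Set (Fin d → ℝ) := frontier (r • Δ)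

/-- The points of `S` lie in a common proper face of `Δ`: there is `u` with
`⟨u,x⟩ ≤ 1` on `Δ` and `⟨u,v⟩ = 1` for all `v ∈ S`. -/
def InCommonFace {d : ℕ} (Δ : Set (Fin d → ℝ)) (S : Set (Fin d → ℝ)) : Prop :=
  ∃ u : Fin d → ℝ, (∀ x ∈ Δ, pairing u x ≤ 1) ∧ ∀ v ∈ S, pairing u v = 1

/-- Coordinatewise cast of an integer vector to a real vector. -/
def toRealVec {d : ℕ} (n : Fin d → ℤ) : Fin d → ℝ := fun i => (n i : ℝ)

/-!
Write `Δ = {x | -1 ≤ ⟨m, x⟩ for all m ∈ Sd}` with `Sd` a finite set of lattice points spanning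
`Δ*`. For a sum `x` of four lattice points of `Δ`, `x ∈ 3·∂Δ ∪ 4·∂Δ` just says that `⟨m, x⟩ ≤ -3`
for some `m ∈ Sd`.

Since `w₁ + w₃ + w₄ + w₅ = 2 w₁ + w₂ + w₅`, if this fails then by integrality
`x₀ = w₁ + (w₂ + w₅)/2 ∈ Δ`. This forces the normals `ma`, `mb` witnessing the hypotheses on
`w₁ + w₂ + w₃ + w₅` and `w₁ + w₂ + w₄ + w₅` to vanish on `w₁` and to be `-1` on `w₂, w₅`. So `x₀`
lies on the face `ma = mb = -1` of `Δ`, whose lattice points have coordinates `(y₀, y₁, 0, 1 - y₁)`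
in the basis `w₁, w₂, w₃, w₅`. The lattice points `w₁ + w₂` and `w₁ + w₅` of the cone are not in
`Δ`; the normals `ms`, `mp` cutting them off force `0 ≤ y₁ ≤ 1` whenever `y₀ > 0`, and then the
cone condition excludes `y`. Hence `y₀ ≤ 0` on the lattice points of the face, whereas `x₀`, a
convex combination of them, has `y₀ = 1`. The second claim is the first one with `w₁` and `w₂`
exchanged.
-/

lemma pairing_eq_dotProduct {d : ℕ} (m n : Fin d → ℝ) : pairing m n = m ⬝ᵥ n := rfl

lemma IsLatticePt.add {d : ℕ} {x y : Fin d → ℝ} (hx : IsLatticePt x) (hy : IsLatticePt y) :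
    IsLatticePt (x + y) := fun i ↦ by
  obtain ⟨a, ha⟩ := hx i
  obtain ⟨b, hb⟩ := hy i
  exact ⟨a + b, by simp [ha, hb]⟩

lemma IsLatticePt.exists_dotProduct_eq_intCast {d : ℕ} {m x : Fin d → ℝ} (hm : IsLatticePt m)
    (hx : IsLatticePt x) : ∃ z : ℤ, m ⬝ᵥ x = z := by
  choose a ha using hm
  choose b hb using hx
  exact ⟨∑ i, a i * b i, by simp [dotProduct, ha, hb]⟩

lemma IsLatticePt.dotProduct_le_of_lt {d : ℕ} {m x : Fin d → ℝ} (hm : IsLatticePt m)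
    (hx : IsLatticePt x) {k : ℤ} (h : m ⬝ᵥ x < k) : m ⬝ᵥ x ≤ k - 1 := by
  obtain ⟨z, hz⟩ := hm.exists_dotProduct_eq_intCast hx
  rw [hz] at h ⊢
  exact_mod_cast Int.le_sub_one_of_lt (by exact_mod_cast h)

lemma IsLatticePt.le_dotProduct_of_lt {d : ℕ} {m x : Fin d → ℝ} (hm : IsLatticePt m)
    (hx : IsLatticePt x) {k : ℤ} (h : k < m ⬝ᵥ x) : k + 1 ≤ m ⬝ᵥ x := by
  obtain ⟨z, hz⟩ := hm.exists_dotProduct_eq_intCast hx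
  rw [hz] at h ⊢
  exact_mod_cast Int.add_one_le_of_lt (by exact_mod_cast h)

theorem IsReflexive.exists_finset_eq_setOf {d : ℕ} {Δ : Set (Fin d → ℝ)} (hΔ : IsReflexive Δ) :
    ∃ Sd : Finset (Fin d → ℝ), (Sd : Set (Fin d → ℝ)) ⊆ latticePts d ∧
      Δ = {x | ∀ m ∈ Sd, -1 ≤ m ⬝ᵥ x} := by
  obtain ⟨⟨S, -, rfl⟩, h0, ⟨Sd, hSdL, hSd⟩⟩ := hΔ
  refine ⟨Sd, hSdL, Set.Subset.antisymm (fun x hx m hm ↦ ?_) fun x hx ↦ ?_⟩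
  · have hm' : m ∈ dualPolytope (convexHull ℝ (S : Set (Fin d → ℝ))) :=
      hSd ▸ subset_convexHull ℝ _ hm
    exact hm' x hx
  by_contra hxΔ
  obtain ⟨f, u, hfΔ, hfx⟩ := geometric_hahn_banach_closed_point (convex_convexHull ℝ _)
    (S.finite_toSet.isCompact_convexHull ℝ).isClosed hxΔ
  have hu : 0 < u := by simpa using hfΔ 0 (interior_subset h0)
  -- the separating functional, rescaled to be `≥ -1` on `Δ`, is a point of the dual polytope
  set m := -u⁻¹ • (dotProductEquiv ℝ (Fin d)).symm f.toLinearMap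
  have hm : ∀ y, m ⬝ᵥ y = -(f y / u) := fun y ↦ by
    rw [smul_dotProduct, ← dotProductEquiv_apply_apply ℝ, LinearEquiv.apply_symm_apply]
    simp [div_eq_inv_mul]
  have hmdual : m ∈ convexHull ℝ (Sd : Set (Fin d → ℝ)) := by
    rw [← hSd]
    intro y hy
    rw [pairing_eq_dotProduct, hm, neg_le_neg_iff, div_le_one hu]
    exact (hfΔ y hy).le
  have hhalf : convexHull ℝ (Sd : Set (Fin d → ℝ)) ⊆ {z | -1 ≤ z ⬝ᵥ x} :=
    convexHull_min (fun z hz ↦ hx z hz)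
      (convex_halfSpace_ge ⟨fun _ _ ↦ add_dotProduct _ _ _, fun _ _ ↦ smul_dotProduct _ _ _⟩ _)
  have := hhalf hmdual
  simp only [Set.mem_ofPred_eq, hm, neg_le_neg_iff, div_le_one hu] at this
  linarith

lemma smul_setOf_forall_le_dotProduct {d : ℕ} (Sd : Finset (Fin d → ℝ)) {r : ℝ} (hr : 0 < r)
    (c : ℝ) : r • {x : Fin d → ℝ | ∀ m ∈ Sd, c ≤ m ⬝ᵥ x} = {x | ∀ m ∈ Sd, r * c ≤ m ⬝ᵥ x} := by
  ext x
  simp only [Set.mem_smul_set_iff_inv_smul_mem₀ hr.ne', Set.mem_ofPred_eq, dotProduct_smul,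
    smul_eq_mul, le_inv_mul_iff₀ hr]

lemma interior_setOf_le_dotProduct {d : ℕ} {c : ℝ} (hc : c < 0) (m : Fin d → ℝ) :
    interior {x : Fin d → ℝ | c ≤ m ⬝ᵥ x} = {x | c < m ⬝ᵥ x} := by
  rcases eq_or_ne m 0 with rfl | hm
  · simp [hc, hc.le]
  set f := dotProductEquiv ℝ (Fin d) m
  have hf : f ≠ 0 := (LinearEquiv.map_ne_zero_iff _).mpr hm
  have hopen := f.isOpenMap_of_finiteDimensional (LinearMap.surjective hf)
  have := (hopen.preimage_interior_eq_interior_preimage f.continuous_of_finiteDimensional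
    (Set.Ici c)).symm
  rwa [interior_Ici] at this

theorem frontier_setOf_forall_le_dotProduct {d : ℕ} (Sd : Finset (Fin d → ℝ)) {c : ℝ}
    (hc : c < 0) : frontier {x : Fin d → ℝ | ∀ m ∈ Sd, c ≤ m ⬝ᵥ x} =
      {x | (∀ m ∈ Sd, c ≤ m ⬝ᵥ x) ∧ ∃ m ∈ Sd, m ⬝ᵥ x = c} := by
  have hA : {x : Fin d → ℝ | ∀ m ∈ Sd, c ≤ m ⬝ᵥ x} =
      ⋂ m ∈ (Sd : Set (Fin d → ℝ)), {x | c ≤ m ⬝ᵥ x} := by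
    ext; simp
  have hclosed : IsClosed {x : Fin d → ℝ | ∀ m ∈ Sd, c ≤ m ⬝ᵥ x} := hA ▸ isClosed_biInter
    fun m _ ↦ isClosed_le continuous_const (continuous_const.dotProduct continuous_id)
  rw [frontier, hclosed.closure_eq, hA, Sd.finite_toSet.interior_biInter]
  ext x
  simp only [interior_setOf_le_dotProduct hc, Set.mem_sdiff, Set.mem_iInter, Set.mem_ofPred_eq]
  constructor
  · rintro ⟨hle, hnlt⟩
    simp only [not_forall, not_lt] at hnlt
    obtain ⟨m, hm, hmx⟩ := hnlt
    exact ⟨hle, m, hm, le_antisymm hmx (hle m hm)⟩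
  · rintro ⟨hle, m, hm, hmx⟩
    exact ⟨hle, fun h ↦ (h m hm).ne' hmx⟩

theorem bdry_setOf_forall_le_dotProduct {d : ℕ} (Sd : Finset (Fin d → ℝ)) {r : ℝ} (hr : 0 < r) :
    bdry r {x : Fin d → ℝ | ∀ m ∈ Sd, -1 ≤ m ⬝ᵥ x} =
      {x | (∀ m ∈ Sd, -r ≤ m ⬝ᵥ x) ∧ ∃ m ∈ Sd, m ⬝ᵥ x = -r} := by
  rw [bdry, smul_setOf_forall_le_dotProduct Sd hr, mul_neg_one,
    frontier_setOf_forall_le_dotProduct Sd (neg_neg_of_pos hr)]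

theorem mem_bdry_three_union_bdry_four_iff {d : ℕ} {Δ : Set (Fin d → ℝ)}
    {Sd : Finset (Fin d → ℝ)} (hSd : (Sd : Set (Fin d → ℝ)) ⊆ latticePts d)
    (hΔSd : Δ = {x | ∀ m ∈ Sd, -1 ≤ m ⬝ᵥ x}) {W : Set (Fin d → ℝ)} (hWΔ : ∀ w ∈ W, w ∈ Δ)
    (hWL : ∀ w ∈ W, IsLatticePt w) ⦃a b c e : Fin d → ℝ⦄ (ha : a ∈ W) (hb : b ∈ W) (hc : c ∈ W)
    (he : e ∈ W) : a + b + c + e ∈ bdry 3 Δ ∪ bdry 4 Δ ↔ ∃ m ∈ Sd, m ⬝ᵥ (a + b + c + e) ≤ -3 := by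
  subst hΔSd
  have hxL := (((hWL a ha).add (hWL b hb)).add (hWL c hc)).add (hWL e he)
  have h4 : ∀ m ∈ Sd, -4 ≤ m ⬝ᵥ (a + b + c + e) := fun m hm ↦ by
    simp only [dotProduct_add]
    linarith [hWΔ a ha m hm, hWΔ b hb m hm, hWΔ c hc m hm, hWΔ e he m hm]
  simp only [bdry_setOf_forall_le_dotProduct Sd three_pos,
    bdry_setOf_forall_le_dotProduct Sd four_pos, Set.mem_union, Set.mem_ofPred_eq]
  constructor
  · rintro (⟨-, m, hm, hmx⟩ | ⟨-, m, hm, hmx⟩) <;> exact ⟨m, hm, by linarith⟩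
  · rintro ⟨m, hm, hmx⟩
    by_cases h3 : ∀ m ∈ Sd, -3 ≤ m ⬝ᵥ (a + b + c + e)
    · exact Or.inl ⟨h3, m, hm, le_antisymm hmx (h3 m hm)⟩
    · simp only [not_forall, not_le] at h3
      obtain ⟨m', hm', hm'x⟩ := h3
      have := (hSd hm').dotProduct_le_of_lt hxL (k := -3) (by exact_mod_cast hm'x)
      exact Or.inr ⟨h4, m', hm', le_antisymm (by push_cast at this; linarith) (h4 m' hm')⟩

theorem IsLatticePolytope.mem_convexHull_face {d : ℕ} {Δ : Set (Fin d → ℝ)}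
    (hΔ : IsLatticePolytope Δ) (m : Fin d → ℝ) {c : ℝ} (hm : ∀ y ∈ Δ, c ≤ m ⬝ᵥ y)
    {x : Fin d → ℝ} (hx : x ∈ Δ) (hmx : m ⬝ᵥ x = c) :
    x ∈ convexHull ℝ {y | y ∈ Δ ∧ IsLatticePt y ∧ m ⬝ᵥ y = c} := by
  obtain ⟨S, hSL, rfl⟩ := hΔ
  obtain ⟨w, hw0, hw1, hwx⟩ := Finset.mem_convexHull'.mp hx
  have hsum : ∑ y ∈ S, w y * (m ⬝ᵥ y - c) = 0 :=
    calc ∑ y ∈ S, w y * (m ⬝ᵥ y - c) = m ⬝ᵥ (∑ y ∈ S, w y • y) - (∑ y ∈ S, w y) * c := by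
          simp only [dotProduct_sum, dotProduct_smul, smul_eq_mul, Finset.sum_mul,
            ← Finset.sum_sub_distrib, mul_sub]
      _ = 0 := by rw [hwx, hw1, hmx, one_mul, sub_self]
  have htight : ∀ y ∈ S, w y ≠ 0 → m ⬝ᵥ y = c := fun y hy hwy ↦ by
    have := (Finset.sum_eq_zero_iff_of_nonneg fun z hz ↦
      mul_nonneg (hw0 z hz) (sub_nonneg.2 (hm z (subset_convexHull ℝ _ hz)))).1 hsum y hy
    exact sub_eq_zero.1 ((mul_eq_zero.1 this).resolve_left hwy)
  refine convexHull_mono (s := ↑(S.filter fun y ↦ m ⬝ᵥ y = c)) (fun y hy ↦ ?_) ?_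
  · obtain ⟨hyS, hyc⟩ := Finset.mem_filter.1 hy
    exact ⟨subset_convexHull ℝ _ hyS, hSL hyS, hyc⟩
  refine Finset.mem_convexHull'.mpr ⟨w, fun y hy ↦ hw0 y (Finset.mem_filter.1 hy).1, ?_, ?_⟩
  · rw [Finset.sum_filter_of_ne fun y hy hwy ↦ htight y hy hwy, hw1]
  · rw [Finset.sum_filter_of_ne fun y hy hwy ↦ htight y hy (left_ne_zero_of_smul hwy), hwx]

lemma dotProduct_eq_sum_repr {d k : ℕ} (b : Module.Basis (Fin k) ℝ (Fin d → ℝ)) (m y : Fin d → ℝ) :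
    m ⬝ᵥ y = ∑ i, b.repr y i * m ⬝ᵥ b i := by
  conv_lhs => rw [← b.sum_repr y]
  simp only [dotProduct_sum, dotProduct_smul, smul_eq_mul]

lemma coneOf_subset_coneOf_comp {d k : ℕ} (v : Fin k → Fin d → ℝ) (σ : Equiv.Perm (Fin k)) :
    coneOf v ⊆ coneOf (v ∘ σ) := by
  rintro _ ⟨r, hr, rfl⟩
  exact ⟨r ∘ σ, fun i ↦ hr _, (Equiv.sum_comp σ fun j ↦ r j • v j).symm⟩

lemma coneOf_comp_equiv {d k : ℕ} (v : Fin k → Fin d → ℝ) (σ : Equiv.Perm (Fin k)) :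
    coneOf (v ∘ σ) = coneOf v := by
  refine Set.Subset.antisymm ?_ (coneOf_subset_coneOf_comp v σ)
  simpa [Function.comp_assoc] using coneOf_subset_coneOf_comp (v ∘ σ) σ.symm

section Cone

variable {d k : ℕ} {Δ : Set (Fin d → ℝ)} (b : Module.Basis (Fin k) ℝ (Fin d → ℝ))

lemma repr_eq_zero_or_single_of_coneOf
    (hcone : coneOf ⇑b ∩ Δ ∩ latticePts d ⊆ insert 0 (Set.range b)) {y : Fin d → ℝ}
    (hyΔ : y ∈ Δ) (hyL : IsLatticePt y) (hy : ∀ i, 0 ≤ b.repr y i) :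
    b.repr y = 0 ∨ ∃ i, b.repr y = Finsupp.single i 1 := by
  rcases hcone ⟨⟨⟨b.repr y, hy, (b.sum_repr y).symm⟩, hyΔ⟩, hyL⟩ with rfl | ⟨i, rfl⟩
  · simp
  · exact Or.inr ⟨i, b.repr_self i⟩

lemma add_notMem_of_coneOf (hcone : coneOf ⇑b ∩ Δ ∩ latticePts d ⊆ insert 0 (Set.range b))
    {i j : Fin k} (hi : IsLatticePt (b i)) (hj : IsLatticePt (b j)) : b i + b j ∉ Δ := by
  intro h
  have hrepr : b.repr (b i + b j) = Finsupp.single i 1 + Finsupp.single j 1 := by simp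
  -- the coordinates of `b i + b j` add up to `2`, those of `0` and of each `b l` to at most `1`
  rcases repr_eq_zero_or_single_of_coneOf b hcone h (hi.add hj) fun l ↦ by
      rw [hrepr]; simp only [Finsupp.coe_add, Pi.add_apply, Finsupp.single_apply]; positivity
    with h0 | ⟨l, hl⟩
  · simpa [hrepr, Finset.sum_add_distrib] using congrArg (fun f : Fin k →₀ ℝ ↦ ∑ n, f n) h0
  · simpa [hrepr, Finset.sum_add_distrib] using congrArg (fun f : Fin k →₀ ℝ ↦ ∑ n, f n) hl

end Cone

lemma exists_dotProduct_eq_neg_one_of_add_notMem {d : ℕ} {Sd : Finset (Fin d → ℝ)}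
    (hSd : (Sd : Set (Fin d → ℝ)) ⊆ latticePts d) {x y : Fin d → ℝ}
    (hx : ∀ m ∈ Sd, -1 ≤ m ⬝ᵥ x) (hy : ∀ m ∈ Sd, -1 ≤ m ⬝ᵥ y) (hxL : IsLatticePt x)
    (hyL : IsLatticePt y) (hxy : ¬ ∀ m ∈ Sd, -1 ≤ m ⬝ᵥ (x + y)) :
    ∃ m ∈ Sd, m ⬝ᵥ x = -1 ∧ m ⬝ᵥ y = -1 := by
  simp only [not_forall, not_le] at hxy
  obtain ⟨m, hm, hmxy⟩ := hxy
  have := (hSd hm).dotProduct_le_of_lt (hxL.add hyL) (k := -1) (by exact_mod_cast hmxy)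
  rw [dotProduct_add] at this
  push_cast at this
  exact ⟨m, hm, by linarith [hx m hm, hy m hm], by linarith [hx m hm, hy m hm]⟩

lemma repr_zero_nonpos_of_coneOf {Δ : Set (Fin 4 → ℝ)} (b : Module.Basis (Fin 4) ℝ (Fin 4 → ℝ))
    (hcone : coneOf ⇑b ∩ Δ ∩ latticePts 4 ⊆ insert 0 (Set.range b)) {ms mp y : Fin 4 → ℝ}
    (hms : ms ⬝ᵥ b 0 = -1 ∧ ms ⬝ᵥ b 1 = -1 ∧ 1 ≤ ms ⬝ᵥ b 3)
    (hmp : mp ⬝ᵥ b 0 = -1 ∧ mp ⬝ᵥ b 3 = -1 ∧ 1 ≤ mp ⬝ᵥ b 1)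
    (hyΔ : y ∈ Δ) (hyL : IsLatticePt y) (hsy : -1 ≤ ms ⬝ᵥ y) (hpy : -1 ≤ mp ⬝ᵥ y)
    (hy₂ : b.repr y 2 = 0) (hy₁₃ : b.repr y 1 + b.repr y 3 = 1) : b.repr y 0 ≤ 0 := by
  by_contra! hy₀
  obtain ⟨hs₀, hs₁, hs₃⟩ := hms
  obtain ⟨hp₀, hp₃, hp₁⟩ := hmp
  rw [dotProduct_eq_sum_repr b, Fin.sum_univ_four, hy₂] at hsy hpy
  rw [hs₀, hs₁] at hsy
  rw [hp₀, hp₃] at hpy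
  -- using `y₁ + y₃ = 1`, `hpy` reads `(1 + ⟨mp, b 1⟩) y₁ ≥ y₀ > 0`, and `hsy` likewise for `y₃`
  have hy₁ : 0 ≤ b.repr y 1 := by nlinarith
  have hy₃ : 0 ≤ b.repr y 3 := by nlinarith
  have hnonneg : ∀ i, 0 ≤ b.repr y i := by
    intro i; fin_cases i <;> simp [hy₀.le, hy₁, hy₂, hy₃]
  rcases repr_eq_zero_or_single_of_coneOf b hcone hyΔ hyL hnonneg with h | ⟨i, h⟩
  · simp [h] at hy₀
  · rw [h] at hy₀ hy₂ hy₁₃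
    fin_cases i <;> simp at hy₀ hy₂ hy₁₃

theorem add_inv_two_smul_add_notMem {Δ : Set (Fin 4 → ℝ)} {Sd : Finset (Fin 4 → ℝ)}
    (b : Module.Basis (Fin 4) ℝ (Fin 4 → ℝ)) (hΔ : IsLatticePolytope Δ)
    (hΔSd : Δ = {x | ∀ m ∈ Sd, -1 ≤ m ⬝ᵥ x})
    (hcone : coneOf ⇑b ∩ Δ ∩ latticePts 4 ⊆ insert 0 (Set.range b)) {ma mb ms mp : Fin 4 → ℝ}
    (hma : ma ∈ Sd) (hmb : mb ∈ Sd) (hms : ms ∈ Sd) (hmp : mp ∈ Sd)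
    (ha : ma ⬝ᵥ b 0 = 0 ∧ ma ⬝ᵥ b 1 = -1 ∧ ma ⬝ᵥ b 2 = -1 ∧ ma ⬝ᵥ b 3 = -1)
    (hb : mb ⬝ᵥ b 0 = 0 ∧ mb ⬝ᵥ b 1 = -1 ∧ mb ⬝ᵥ b 2 = 0 ∧ mb ⬝ᵥ b 3 = -1)
    (hs : ms ⬝ᵥ b 0 = -1 ∧ ms ⬝ᵥ b 1 = -1 ∧ 1 ≤ ms ⬝ᵥ b 3)
    (hp : mp ⬝ᵥ b 0 = -1 ∧ mp ⬝ᵥ b 3 = -1 ∧ 1 ≤ mp ⬝ᵥ b 1) :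
    b 0 + (2⁻¹ : ℝ) • (b 1 + b 3) ∉ Δ := by
  intro hx
  subst hΔSd
  obtain ⟨ha₀, ha₁, ha₂, ha₃⟩ := ha
  obtain ⟨hb₀, hb₁, hb₂, hb₃⟩ := hb
  -- `ma + mb` is `≥ -2` on `Δ`, with equality exactly on the face where `ma = mb = -1`
  have hface := hΔ.mem_convexHull_face (ma + mb) (c := -2)
    (fun y hy ↦ by rw [add_dotProduct]; linarith [hy ma hma, hy mb hmb]) hx
    (by simp only [add_dotProduct, dotProduct_add, dotProduct_smul, smul_eq_mul, ha₀, ha₁, ha₃,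
      hb₀, hb₁, hb₃]; norm_num)
  have hle : b.coord 0 (b 0 + (2⁻¹ : ℝ) • (b 1 + b 3)) ≤ 0 := by
    refine convexHull_min (fun y hyT ↦ ?_) (convex_halfSpace_le (b.coord 0).isLinear 0) hface
    obtain ⟨hyΔ, hyL, hy⟩ := hyT
    have hya : ma ⬝ᵥ y = -1 := by rw [add_dotProduct] at hy; linarith [hyΔ ma hma, hyΔ mb hmb]
    have hyb : mb ⬝ᵥ y = -1 := by rw [add_dotProduct] at hy; linarith [hyΔ ma hma, hyΔ mb hmb]
    rw [dotProduct_eq_sum_repr b, Fin.sum_univ_four, ha₀, ha₁, ha₂, ha₃] at hya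
    rw [dotProduct_eq_sum_repr b, Fin.sum_univ_four, hb₀, hb₁, hb₂, hb₃] at hyb
    exact repr_zero_nonpos_of_coneOf b hcone hs hp hyΔ hyL (hyΔ ms hms) (hyΔ mp hmp)
      (by linarith) (by linarith)
  have hx₀ : b.coord 0 (b 0 + (2⁻¹ : ℝ) • (b 1 + b 3)) = 1 := by simp
  linarith

theorem exists_dotProduct_le_neg_three_of_circuit {Δ : Set (Fin 4 → ℝ)}
    {Sd : Finset (Fin 4 → ℝ)} (hΔ : IsLatticePolytope Δ)
    (hSd : (Sd : Set (Fin 4 → ℝ)) ⊆ latticePts 4) (hΔSd : Δ = {x | ∀ m ∈ Sd, -1 ≤ m ⬝ᵥ x})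
    {w₁ w₂ w₃ w₄ w₅ : Fin 4 → ℝ}
    (hwΔ : ∀ w ∈ ({w₁, w₂, w₃, w₄, w₅} : Set (Fin 4 → ℝ)), w ∈ Δ)
    (hwL : ∀ w ∈ ({w₁, w₂, w₃, w₄, w₅} : Set (Fin 4 → ℝ)), IsLatticePt w)
    (hsum : w₁ + w₂ = w₃ + w₄) (hli : LinearIndependent ℝ ![w₁, w₂, w₃, w₅])
    (hcone : coneOf ![w₁, w₂, w₃, w₅] ∩ Δ ∩ latticePts 4 ⊆
      insert 0 (Set.range ![w₁, w₂, w₃, w₅]))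
    (hs : ∃ m ∈ Sd, m ⬝ᵥ (w₁ + w₂ + w₃ + w₅) ≤ -3) (ht : ∃ m ∈ Sd, m ⬝ᵥ (w₁ + w₂ + w₄ + w₅) ≤ -3) :
    ∃ m ∈ Sd, m ⬝ᵥ (w₁ + w₃ + w₄ + w₅) ≤ -3 := by
  by_contra! hP
  obtain ⟨b, hb⟩ : ∃ b : Module.Basis (Fin 4) ℝ (Fin 4 → ℝ), ![w₁, w₂, w₃, w₅] = ⇑b :=
    ⟨_, (coe_basisOfLinearIndependentOfCardEqFinrank hli (by simp)).symm⟩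
  rw [hb] at hcone
  obtain ⟨rfl, rfl, rfl, rfl⟩ : w₁ = b 0 ∧ w₂ = b 1 ∧ w₃ = b 2 ∧ w₅ = b 3 := by simp [← hb]
  obtain rfl : w₄ = b 0 + b 1 - b 2 := by rw [hsum]; abel
  simp only [Set.mem_insert_iff, Set.mem_singleton_iff, forall_eq_or_imp, forall_eq] at hwΔ hwL
  obtain ⟨hΔ₀, hΔ₁, hΔ₂, hΔ₄, hΔ₃⟩ := hwΔ
  obtain ⟨hL₀, hL₁, hL₂, hL₄, hL₃⟩ := hwL
  have hx : ∀ m ∈ Sd, -2 ≤ 2 * m ⬝ᵥ b 0 + m ⬝ᵥ b 1 + m ⬝ᵥ b 3 := fun m hm ↦ by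
    have := (hSd hm).le_dotProduct_of_lt (((hL₀.add hL₂).add hL₄).add hL₃) (k := -3)
      (by exact_mod_cast hP m hm)
    simp only [dotProduct_add, dotProduct_sub] at this
    push_cast at this
    linarith
  subst hΔSd
  obtain ⟨ma, hma, hmas⟩ := hs
  obtain ⟨mb, hmb, hmbt⟩ := ht
  obtain ⟨ms, hms, hms₀, hms₁⟩ := exists_dotProduct_eq_neg_one_of_add_notMem hSd hΔ₀ hΔ₁ hL₀ hL₁
    (add_notMem_of_coneOf b hcone hL₀ hL₁)
  obtain ⟨mp, hmp, hmp₀, hmp₃⟩ := exists_dotProduct_eq_neg_one_of_add_notMem hSd hΔ₀ hΔ₃ hL₀ hL₃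
    (add_notMem_of_coneOf b hcone hL₀ hL₃)
  simp only [Set.mem_ofPred_eq, dotProduct_add, dotProduct_sub] at hmas hmbt hΔ₄
  refine add_inv_two_smul_add_notMem b hΔ rfl hcone hma hmb hms hmp ?_ ?_
    ⟨hms₀, hms₁, by linarith [hx ms hms]⟩ ⟨hmp₀, hmp₃, by linarith [hx mp hmp]⟩ fun m hm ↦ ?_
  · refine ⟨?_, ?_, ?_, ?_⟩ <;>
      linarith [hx ma hma, hΔ₀ ma hma, hΔ₁ ma hma, hΔ₂ ma hma, hΔ₃ ma hma]
  · refine ⟨?_, ?_, ?_, ?_⟩ <;>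
      linarith [hx mb hmb, hΔ₀ mb hmb, hΔ₁ mb hmb, hΔ₂ mb hmb, hΔ₃ mb hmb, hΔ₄ mb hmb]
  · simp only [dotProduct_add, dotProduct_smul, smul_eq_mul]
    linarith [hx m hm]

theorem wall_crossing_four_element_circuit_general
    (Δ : Set (Fin 4 → ℝ)) (hΔ : IsReflexive Δ)
    (w₁ w₂ w₃ w₄ w₅ : Fin 4 → ℝ)
    (hwΔ : ∀ w ∈ ({w₁, w₂, w₃, w₄, w₅} : Set (Fin 4 → ℝ)), w ∈ Δ)
    (hwL : ∀ w ∈ ({w₁, w₂, w₃, w₄, w₅} : Set (Fin 4 → ℝ)), IsLatticePt w)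
    (hsum : w₁ + w₂ = w₃ + w₄)
    (hli : LinearIndependent ℝ ![w₁, w₂, w₃, w₅])
    (hc1 : coneOf ![w₁, w₂, w₃, w₅] ∩ Δ ∩ latticePts 4
      = ({0, w₁, w₂, w₃, w₅} : Set (Fin 4 → ℝ)))
    (h1 : w₁ + w₂ + w₃ + w₅ ∈ bdry 3 Δ ∪ bdry 4 Δ)
    (h2 : w₁ + w₂ + w₄ + w₅ ∈ bdry 3 Δ ∪ bdry 4 Δ) :
    w₁ + w₃ + w₄ + w₅ ∈ bdry 3 Δ ∪ bdry 4 Δ ∧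
    w₂ + w₃ + w₄ + w₅ ∈ bdry 3 Δ ∪ bdry 4 Δ := by
  obtain ⟨Sd, hSd, hΔSd⟩ := hΔ.exists_finset_eq_setOf
  have hbdry := mem_bdry_three_union_bdry_four_iff hSd hΔSd hwΔ hwL
  rw [hbdry (by simp) (by simp) (by simp) (by simp)] at h1 h2
  rw [hbdry (by simp) (by simp) (by simp) (by simp), hbdry (by simp) (by simp) (by simp) (by simp)]
  have hrange : insert 0 (Set.range ![w₁, w₂, w₃, w₅]) = {0, w₁, w₂, w₃, w₅} := by
    simp only [Matrix.range_cons, Matrix.range_empty, Set.singleton_union, Set.union_empty]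
  have hcone := (hc1.trans hrange.symm).subset
  have hperm : ![w₂, w₁, w₃, w₅] = ![w₁, w₂, w₃, w₅] ∘ Equiv.swap 0 1 := by
    ext i : 1; fin_cases i <;> rfl
  have hswap : ({w₂, w₁, w₃, w₄, w₅} : Set (Fin 4 → ℝ)) = {w₁, w₂, w₃, w₄, w₅} :=
    Set.insert_comm _ _ _
  refine ⟨exists_dotProduct_le_neg_three_of_circuit hΔ.1 hSd hΔSd hwΔ hwL hsum hli hcone h1 h2,
    exists_dotProduct_le_neg_three_of_circuit hΔ.1 hSd hΔSd (hswap ▸ hwΔ) (hswap ▸ hwL)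
      (by rw [add_comm, hsum]) (hperm ▸ hli.comp _ (Equiv.injective _)) ?_
      (by simpa only [add_comm w₂ w₁] using h1) (by simpa only [add_comm w₂ w₁] using h2)⟩
  rwa [hperm, coneOf_comp_equiv, EquivLike.range_comp]

/-- Wall crossing with a four-element circuit preserves good maximal
cones: if `w₁+w₂ = w₃+w₄`, `{w₁,w₂,w₃,w₅}` is linearly independent, the two cones
`Cone(w₁,w₂,w₃,w₅)` and `Cone(w₁,w₂,w₄,w₅)` meet `Δ ∩ ℤ⁴` only in `0` and their
generators, and both `w₁+w₂+w₃+w₅` and `w₁+w₂+w₄+w₅` lie in `3·∂Δ ∪ 4·∂Δ`, then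
`w₁+w₃+w₄+w₅` and `w₂+w₃+w₄+w₅` also lie in `3·∂Δ ∪ 4·∂Δ`. -/
theorem wall_crossing_four_element_circuit
    (Δ : Set (Fin 4 → ℝ)) (hΔ : IsReflexive Δ)
    (w₁ w₂ w₃ w₄ w₅ : Fin 4 → ℝ)
    (hwΔ : ∀ w ∈ ({w₁, w₂, w₃, w₄, w₅} : Set (Fin 4 → ℝ)), w ∈ Δ)
    (hwL : ∀ w ∈ ({w₁, w₂, w₃, w₄, w₅} : Set (Fin 4 → ℝ)), IsLatticePt w)
    (hsum : w₁ + w₂ = w₃ + w₄)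
    (hli : LinearIndependent ℝ ![w₁, w₂, w₃, w₅])
    (hc1 : coneOf ![w₁, w₂, w₃, w₅] ∩ Δ ∩ latticePts 4
      = ({0, w₁, w₂, w₃, w₅} : Set (Fin 4 → ℝ)))
    (hc2 : coneOf ![w₁, w₂, w₄, w₅] ∩ Δ ∩ latticePts 4
      = ({0, w₁, w₂, w₄, w₅} : Set (Fin 4 → ℝ)))
    (h1 : w₁ + w₂ + w₃ + w₅ ∈ bdry 3 Δ ∪ bdry 4 Δ)
    (h2 : w₁ + w₂ + w₄ + w₅ ∈ bdry 3 Δ ∪ bdry 4 Δ) :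
    w₁ + w₃ + w₄ + w₅ ∈ bdry 3 Δ ∪ bdry 4 Δ ∧
    w₂ + w₃ + w₄ + w₅ ∈ bdry 3 Δ ∪ bdry 4 Δ :=
  wall_crossing_four_element_circuit_general Δ hΔ w₁ w₂ w₃ w₄ w₅ hwΔ hwL hsum hli hc1 h1 h2
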